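/- Let w ∈ 𝒟 (i.e., w = 0^l(Ds) or 1^l(Ds) with s Sturmian) and let θ be the slope of w. Then 100·Dc_θ ≼_alt w ≼_alt 011·Dc_θ, where c_θ is the characteristic Sturmian word of slope θ. -/

import Mathlib

/-- A sequence (indexed from 1) over the alphabet {0,1}. -/
def IsBinary (s : ℕ → ℤ) : Prop := ∀ i, s i = 0 ∨ s i = 1

/-- `s` is a Sturmian word of slope `θ` (floor or ceiling form). -/
def IsSturmian (θ : ℝ) (s : ℕ → ℤ) : Prop :=
  Irrational θ ∧ θ ∈ Set.Ioo (0:ℝ) 1 ∧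
    ∃ ρ : ℝ,
      (∀ n : ℕ, 1 ≤ n → s n = ⌊((n:ℝ)+1)*θ+ρ⌋ - ⌊(n:ℝ)*θ+ρ⌋) ∨
      (∀ n : ℕ, 1 ≤ n → s n = ⌈((n:ℝ)+1)*θ+ρ⌉ - ⌈(n:ℝ)*θ+ρ⌉)

/-- The characteristic Sturmian word of slope `θ`. -/
noncomputable def charWord (θ : ℝ) : ℕ → ℤ := fun n => ⌊((n:ℝ)+1)*θ⌋ - ⌊(n:ℝ)*θ⌋

/-- `tval r s = ∑_{i ≥ 1} s i * r ^ i`. -/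
noncomputable def tval (r : ℝ) (s : ℕ → ℤ) : ℝ := ∑' i : ℕ, (s (i+1) : ℝ) * r^(i+1)

/-- Equality of infinite words (positions ≥ 1). -/
def EqW (s s' : ℕ → ℤ) : Prop := ∀ i, 1 ≤ i → s i = s' i

/-- Strict lexicographic order on infinite words (positions ≥ 1). -/
def LexLt (s s' : ℕ → ℤ) : Prop :=
  ∃ n, 1 ≤ n ∧ (∀ i, 1 ≤ i → i < n → s i = s' i) ∧ s n < s' n

def LexLe (s s' : ℕ → ℤ) : Prop := LexLt s s' ∨ EqW s s'

/-- Strict alternate order on infinite words. -/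
def AltLt (s s' : ℕ → ℤ) : Prop :=
  ∃ n, 1 ≤ n ∧ (∀ i, 1 ≤ i → i < n → s i = s' i) ∧ (-1:ℤ)^n * (s' n - s n) = 1

def AltLe (s s' : ℕ → ℤ) : Prop := AltLt s s' ∨ EqW s s'

/-- The doubling map `D(w₁w₂…) = w₁w₁w₂w₂…`. -/
def Dbl (w : ℕ → ℤ) : ℕ → ℤ := fun n => w ((n+1)/2)

/-- The shift map `T(w₁w₂w₃…) = w₂w₃…`. -/
def Shf (w : ℕ → ℤ) : ℕ → ℤ := fun n => w (n+1)

/-- The word `a^l s` : the letter `a` repeated `l` times followed by `s`. -/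
def Prepend (a : ℤ) (l : ℕ) (s : ℕ → ℤ) : ℕ → ℤ := fun n => if n ≤ l then a else s (n - l)

/-- The finite word `u` followed by the infinite word `s`. -/
def Cat (u : List ℤ) (s : ℕ → ℤ) : ℕ → ℤ :=
  fun n => if n ≤ u.length then u.getD (n-1) 0 else s (n - u.length)

/-- The finite word `u` occurs as a contiguous block of `s` (at a position ≥ 1). -/
def Subword (u : List ℤ) (s : ℕ → ℤ) : Prop :=
  ∃ n, 1 ≤ n ∧ ∀ i, i < u.length → s (n + i) = u.getD i 0

/-- `s` is aperiodic: not eventually periodic. -/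
def Aperiodic (s : ℕ → ℤ) : Prop :=
  ¬ ∃ k, 1 ≤ k ∧ ∃ N, 1 ≤ N ∧ ∀ n, N ≤ n → s n = s (n + k)

/-- `w` has slope `θ`: the averages of its letters tend to `θ`. -/
def HasSlope (w : ℕ → ℤ) (θ : ℝ) : Prop :=
  Filter.Tendsto (fun n : ℕ => (∑ i ∈ Finset.Icc 1 n, (w i : ℝ)) / n)
    Filter.atTop (nhds θ)

/-- The class `S` of words of the form `0^l s` or `1^l s` with `s` Sturmian. -/
def MemS (w : ℕ → ℤ) : Prop :=
  ∃ a l s θ, (a = (0:ℤ) ∨ a = 1) ∧ IsSturmian θ s ∧ EqW w (Prepend a l s)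

/-- The class `𝒟` of words of the form `0^l (D s)` or `1^l (D s)` with `s` Sturmian. -/
def MemD (w : ℕ → ℤ) : Prop :=
  ∃ a l s θ, (a = (0:ℤ) ∨ a = 1) ∧ IsSturmian θ s ∧ EqW w (Prepend a l (Dbl s))

/-- The class `𝒫 = D(Σ^ℕ) ∪ T(D(Σ^ℕ))` with `Σ = {0,1}`. -/
def MemP (w : ℕ → ℤ) : Prop :=
  (∃ u, IsBinary u ∧ EqW w (Dbl u)) ∨ (∃ u, IsBinary u ∧ EqW w (Shf (Dbl u)))

/-!
Write `w = a^l D(s)` with `s` mechanical: `s n = f((n+1)θ + ρ) - f(nθ + ρ)` where `f` is `⌊·⌋` or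
`⌈·⌉`. The partial sums of `s` stay within bounded distance of `nθ`, and this survives doubling
and prefixing, so `θ` is the slope of `s` as well.

One of the two inequalities is always decided by the first letter of `w`; the other one too,
unless `w` begins with `10` (left) or `01` (right). Then `l = 1` and `w = a s₁ s₁ D(Ts)`, where
`Ts` is the mechanical word with intercept `ρ + θ`. Since `f(x + ρ) - f(ρ) - ⌊x⌋ ∈ {0, 1}`,
comparing partial sums gives `c_θ ≤_lex Ts` when `s₁ = 0` and `Ts ≤_lex c_θ` when `s₁ = 1`.
Doubling moves a first difference at position `n` to position `2n - 1`, which is even behind the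
prefix of length 3, and there the alternate order agrees with the lexicographic one.
-/

open Finset

structure IsRounding (f : ℝ → ℤ) : Prop where
  mono : Monotone f
  map_add_intCast : ∀ x (k : ℤ), f (x + k) = f x + k

theorem isRounding_floor : IsRounding (Int.floor : ℝ → ℤ) :=
  ⟨Int.floor_mono, Int.floor_add_intCast⟩

theorem isRounding_ceil : IsRounding (Int.ceil : ℝ → ℤ) :=
  ⟨Int.ceil_mono, Int.ceil_add_intCast⟩

namespace IsRounding

variable {f : ℝ → ℤ}

theorem add_floor_le (hf : IsRounding f) (x y : ℝ) : f y + ⌊x⌋ ≤ f (y + x) := by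
  rw [← hf.map_add_intCast]
  exact hf.mono (by linarith [Int.floor_le x])

theorem le_add_floor_add_one (hf : IsRounding f) (x y : ℝ) : f (y + x) ≤ f y + ⌊x⌋ + 1 := by
  rw [add_assoc, ← hf.map_add_intCast]
  exact hf.mono (by push_cast; linarith [Int.lt_floor_add_one x])

end IsRounding

def mechWord (f : ℝ → ℤ) (θ ρ : ℝ) : ℕ → ℤ :=
  fun n => f (((n : ℝ) + 1) * θ + ρ) - f ((n : ℝ) * θ + ρ)

section MechWord

variable {f : ℝ → ℤ} {θ ρ : ℝ}

theorem charWord_eq_mechWord (θ : ℝ) : charWord θ = mechWord Int.floor θ 0 := by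
  funext n
  simp [charWord, mechWord]

theorem shf_mechWord : Shf (mechWord f θ ρ) = mechWord f θ (ρ + θ) := by
  funext n
  simp only [Shf, mechWord]
  push_cast
  ring_nf

theorem sum_Icc_mechWord (f : ℝ → ℤ) (θ ρ : ℝ) (n : ℕ) :
    ∑ i ∈ Icc 1 n, mechWord f θ ρ i = f (((n : ℝ) + 1) * θ + ρ) - f (θ + ρ) := by
  rw [← Finset.Ico_add_one_right_eq_Icc]
  have := Finset.sum_Ico_sub (fun i : ℕ => f ((i : ℝ) * θ + ρ)) (by omega : 1 ≤ n + 1)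
  simpa [mechWord] using this

theorem IsRounding.isBinary_mechWord (hf : IsRounding f) (hθ : θ ∈ Set.Icc (0 : ℝ) 1) :
    IsBinary (mechWord f θ ρ) := by
  intro n
  have hlo : f ((n : ℝ) * θ + ρ) ≤ f (((n : ℝ) + 1) * θ + ρ) := hf.mono (by nlinarith [hθ.1])
  have hhi : f (((n : ℝ) + 1) * θ + ρ) ≤ f ((n : ℝ) * θ + ρ) + 1 := by
    rw [← Int.cast_one, ← hf.map_add_intCast]
    exact hf.mono (by push_cast; nlinarith [hθ.2])
  simp only [mechWord]
  omega

theorem isBinary_charWord (hθ : θ ∈ Set.Icc (0 : ℝ) 1) : IsBinary (charWord θ) := by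
  rw [charWord_eq_mechWord]
  exact isRounding_floor.isBinary_mechWord hθ

theorem sum_Icc_charWord (hθ : θ ∈ Set.Ico (0 : ℝ) 1) (n : ℕ) :
    ∑ i ∈ Icc 1 n, charWord θ i = ⌊((n : ℝ) + 1) * θ⌋ := by
  simp [charWord_eq_mechWord, sum_Icc_mechWord, Int.floor_eq_zero_iff.mpr hθ]

end MechWord

theorem lexLe_of_sum_le {u v : ℕ → ℤ} (h : ∀ n, ∑ i ∈ Icc 1 n, u i ≤ ∑ i ∈ Icc 1 n, v i) :
    LexLe u v := by
  classical
  by_cases huv : EqW u v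
  · exact Or.inr huv
  have hex : ∃ n, 1 ≤ n ∧ u n ≠ v n := by simpa [EqW] using huv
  obtain ⟨hn, hne⟩ := Nat.find_spec hex
  have hbefore : ∀ i, 1 ≤ i → i < Nat.find hex → u i = v i := fun i hi hlt => by
    by_contra hne'
    exact Nat.find_min hex hlt ⟨hi, hne'⟩
  obtain ⟨m, hm⟩ : ∃ m, Nat.find hex = m + 1 := ⟨Nat.find hex - 1, by omega⟩
  have hprefix : ∑ i ∈ Icc 1 m, u i = ∑ i ∈ Icc 1 m, v i :=
    sum_congr rfl fun i hi => hbefore i (mem_Icc.1 hi).1 (by have := (mem_Icc.1 hi).2; omega)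
  have hsum := h (m + 1)
  rw [sum_Icc_succ_top (by omega), sum_Icc_succ_top (by omega), hprefix] at hsum
  refine Or.inl ⟨m + 1, by omega, hm ▸ hbefore, ?_⟩
  rw [← hm] at hsum ⊢
  omega

section Comparison

variable {f : ℝ → ℤ} {θ ρ : ℝ}

theorem IsRounding.charWord_lexLe_mechWord (hf : IsRounding f) (hθ : θ ∈ Set.Ico (0 : ℝ) 1)
    (h0 : mechWord f θ ρ 0 = 0) : LexLe (charWord θ) (mechWord f θ ρ) := by
  refine lexLe_of_sum_le fun n => ?_
  simp only [mechWord, Nat.cast_zero, zero_add, one_mul, zero_mul] at h0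
  rw [sum_Icc_charWord hθ, sum_Icc_mechWord]
  have := hf.add_floor_le (((n : ℝ) + 1) * θ) ρ
  rw [add_comm ρ] at this
  omega

theorem IsRounding.mechWord_lexLe_charWord (hf : IsRounding f) (hθ : θ ∈ Set.Ico (0 : ℝ) 1)
    (h0 : mechWord f θ ρ 0 = 1) : LexLe (mechWord f θ ρ) (charWord θ) := by
  refine lexLe_of_sum_le fun n => ?_
  simp only [mechWord, Nat.cast_zero, zero_add, one_mul, zero_mul] at h0
  rw [sum_Icc_charWord hθ, sum_Icc_mechWord]
  have := hf.le_add_floor_add_one (((n : ℝ) + 1) * θ) ρ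
  rw [add_comm ρ] at this
  omega

end Comparison

section Orders

variable {p : List ℤ} {u v : ℕ → ℤ}

theorem EqW.symm (h : EqW u v) : EqW v u := fun i hi => (h i hi).symm

theorem EqW.trans {w : ℕ → ℤ} (huv : EqW u v) (hvw : EqW v w) : EqW u w :=
  fun i hi => (huv i hi).trans (hvw i hi)

theorem EqW.cat_dbl (h : EqW u v) : EqW (Cat p (Dbl u)) (Cat p (Dbl v)) := by
  intro i hi
  simp only [Cat, Dbl]
  split_ifs
  · rfl
  · exact h _ (by omega)

theorem AltLe.of_eqW {u u' v v' : ℕ → ℤ} (h : AltLe u v) (hu : EqW u u') (hv : EqW v v') :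
    AltLe u' v' := by
  rcases h with ⟨n, hn, hbefore, hn'⟩ | h
  · refine Or.inl ⟨n, hn, fun i hi hin => ?_, ?_⟩
    · rw [← hu i hi, ← hv i hi, hbefore i hi hin]
    · rwa [← hu n hn, ← hv n hn]
  · exact Or.inr fun i hi => by rw [← hu i hi, ← hv i hi, h i hi]

theorem LexLt.altLt_cat_dbl (h : LexLt u v) (hp : Odd p.length) (hu : IsBinary u)
    (hv : IsBinary v) : AltLt (Cat p (Dbl u)) (Cat p (Dbl v)) := by
  obtain ⟨n, hn, hbefore, hlt⟩ := h
  obtain ⟨k, hk⟩ := hp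
  obtain ⟨hun, hvn⟩ : u n = 0 ∧ v n = 1 := by
    rcases hu n with h | h <;> rcases hv n with h' | h' <;> omega
  refine ⟨p.length + 2 * n - 1, by omega, fun i hi hin => ?_, ?_⟩
  · simp only [Cat, Dbl]
    split_ifs
    · rfl
    · exact hbefore _ (by omega) (by omega)
  · have hpos : ¬ p.length + 2 * n - 1 ≤ p.length := by omega
    have hidx : (p.length + 2 * n - 1 - p.length + 1) / 2 = n := by omega
    have hsign : (-1 : ℤ) ^ (p.length + 2 * n - 1) = 1 := Even.neg_one_pow ⟨k + n, by omega⟩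
    simp only [Cat, Dbl, if_neg hpos, hidx, hsign, hun, hvn]
    norm_num

theorem LexLe.altLe_cat_dbl (h : LexLe u v) (hp : Odd p.length) (hu : IsBinary u)
    (hv : IsBinary v) : AltLe (Cat p (Dbl u)) (Cat p (Dbl v)) :=
  h.imp (·.altLt_cat_dbl hp hu hv) EqW.cat_dbl

end Orders

section Slope

theorem sum_Icc_apply_succ_div_two {M : Type*} [AddCommMonoid M] (g : ℕ → M) (t : ℕ) :
    ∑ i ∈ Icc 1 t, g ((i + 1) / 2) = ∑ i ∈ Icc 1 (t / 2), g i + ∑ i ∈ Icc 1 ((t + 1) / 2), g i := by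
  induction t with
  | zero => simp
  | succ t ih =>
    rw [sum_Icc_succ_top (by omega), ih]
    rcases Nat.even_or_odd t with ⟨k, rfl⟩ | ⟨k, rfl⟩
    · rw [show (k + k + 1) / 2 = k by omega, show (k + k + 1 + 1) / 2 = k + 1 by omega,
        show (k + k) / 2 = k by omega, sum_Icc_succ_top (by omega : 1 ≤ k + 1)]
      abel
    · rw [show (2 * k + 1) / 2 = k by omega, show (2 * k + 1 + 1) / 2 = k + 1 by omega,
        show (2 * k + 1 + 1 + 1) / 2 = k + 1 by omega, sum_Icc_succ_top (by omega : 1 ≤ k + 1)]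
      abel

theorem sum_Icc_ite_le {M : Type*} [AddCommMonoid M] (c : M) (g : ℕ → M) (l m : ℕ) :
    ∑ i ∈ Icc 1 m, (if i ≤ l then c else g (i - l)) = min l m • c + ∑ i ∈ Icc 1 (m - l), g i := by
  induction m with
  | zero => simp
  | succ m ih =>
    rw [sum_Icc_succ_top (by omega), ih]
    by_cases hm : m + 1 ≤ l
    · rw [if_pos hm, show min l (m + 1) = min l m + 1 by omega, show m + 1 - l = m - l by omega,
        succ_nsmul]
      abel
    · rw [if_neg hm, show min l (m + 1) = min l m by omega, show m + 1 - l = m - l + 1 by omega,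
        sum_Icc_succ_top (by omega : 1 ≤ m - l + 1), show m - l + 1 = m + 1 - l by omega]
      abel

def BoundedDiscrepancy (w : ℕ → ℤ) (θ : ℝ) : Prop :=
  ∃ K, ∀ n : ℕ, |∑ i ∈ Icc 1 n, (w i : ℝ) - n * θ| ≤ K

namespace BoundedDiscrepancy

variable {w : ℕ → ℤ} {θ : ℝ}

theorem hasSlope (h : BoundedDiscrepancy w θ) : HasSlope w θ := by
  obtain ⟨K, hK⟩ := h
  rw [HasSlope, ← tendsto_sub_nhds_zero_iff]
  refine squeeze_zero_norm' ?_ (tendsto_const_div_atTop_nhds_zero_nat K)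
  filter_upwards [Filter.eventually_gt_atTop 0] with n hn
  have hn' : (0 : ℝ) < n := by exact_mod_cast hn
  rw [Real.norm_eq_abs, show (∑ i ∈ Icc 1 n, (w i : ℝ)) / n - θ
      = (∑ i ∈ Icc 1 n, (w i : ℝ) - n * θ) / n by field_simp, abs_div, abs_of_pos hn']
  exact div_le_div_of_nonneg_right (hK n) hn'.le

theorem congr {w' : ℕ → ℤ} (h : BoundedDiscrepancy w θ) (hw : EqW w w') :
    BoundedDiscrepancy w' θ := by
  obtain ⟨K, hK⟩ := h
  refine ⟨K, fun n => ?_⟩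
  rw [← sum_congr rfl fun i hi => congrArg ((↑) : ℤ → ℝ) (hw i (mem_Icc.1 hi).1)]
  exact hK n

theorem dbl (h : BoundedDiscrepancy w θ) : BoundedDiscrepancy (Dbl w) θ := by
  obtain ⟨K, hK⟩ := h
  refine ⟨K + K, fun t => ?_⟩
  have ht : ((t / 2 : ℕ) : ℝ) + ((t + 1) / 2 : ℕ) = t := by
    exact_mod_cast (by omega : t / 2 + (t + 1) / 2 = t)
  calc |∑ i ∈ Icc 1 t, (Dbl w i : ℝ) - t * θ|
      = |(∑ i ∈ Icc 1 (t / 2), (w i : ℝ) - (t / 2 : ℕ) * θ)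
          + (∑ i ∈ Icc 1 ((t + 1) / 2), (w i : ℝ) - ((t + 1) / 2 : ℕ) * θ)| := by
        rw [← ht]
        simp only [Dbl]
        rw [sum_Icc_apply_succ_div_two (fun i => (w i : ℝ))]
        ring_nf
    _ ≤ K + K := (abs_add_le _ _).trans (add_le_add (hK _) (hK _))

theorem prepend (h : BoundedDiscrepancy w θ) (a : ℤ) (l : ℕ) :
    BoundedDiscrepancy (Prepend a l w) θ := by
  obtain ⟨K, hK⟩ := h
  refine ⟨l * |a - θ| + K, fun m => ?_⟩
  have hm : ((m - l : ℕ) : ℝ) + (min l m : ℕ) = m := by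
    exact_mod_cast (by omega : m - l + min l m = m)
  have hmin : ((min l m : ℕ) : ℝ) ≤ l := by exact_mod_cast min_le_left l m
  calc |∑ i ∈ Icc 1 m, (Prepend a l w i : ℝ) - m * θ|
      = |(min l m : ℕ) * ((a : ℝ) - θ) + (∑ i ∈ Icc 1 (m - l), (w i : ℝ) - (m - l : ℕ) * θ)| := by
        rw [← hm]
        simp only [Prepend, apply_ite ((↑) : ℤ → ℝ)]
        rw [sum_Icc_ite_le (a : ℝ) (fun i => (w i : ℝ)), nsmul_eq_mul]
        ring_nf
    _ ≤ l * |a - θ| + K := by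
        refine (abs_add_le _ _).trans (add_le_add ?_ (hK _))
        rw [abs_mul, Nat.abs_cast]
        exact mul_le_mul_of_nonneg_right hmin (abs_nonneg _)

end BoundedDiscrepancy

theorem IsRounding.boundedDiscrepancy_mechWord {f : ℝ → ℤ} (hf : IsRounding f) (θ ρ : ℝ) :
    BoundedDiscrepancy (mechWord f θ ρ) θ := by
  refine ⟨1, fun n => ?_⟩
  have hsum := sum_Icc_mechWord f θ ρ n
  rw [show ((n : ℝ) + 1) * θ + ρ = (θ + ρ) + n * θ by ring] at hsum
  have hlo := hf.add_floor_le (n * θ) (θ + ρ)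
  have hhi := hf.le_add_floor_add_one (n * θ) (θ + ρ)
  have hfl := Int.floor_le ((n : ℝ) * θ)
  have hfl' := Int.lt_floor_add_one ((n : ℝ) * θ)
  rw [← Int.cast_sum, hsum, abs_le]
  constructor
  · have : (⌊(n : ℝ) * θ⌋ : ℝ) ≤ (f (θ + ρ + n * θ) - f (θ + ρ) : ℤ) := by
      exact_mod_cast (by omega)
    linarith
  · have : ((f (θ + ρ + n * θ) - f (θ + ρ) : ℤ) : ℝ) ≤ ⌊(n : ℝ) * θ⌋ + 1 := by
      exact_mod_cast (by omega)
    linarith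

end Slope

section Structure

variable {s t : ℕ → ℤ} {a : ℤ} {l : ℕ}

theorem IsSturmian.exists_mechWord {θ : ℝ} (h : IsSturmian θ s) :
    ∃ f ρ, IsRounding f ∧ EqW s (mechWord f θ ρ) := by
  obtain ⟨-, -, ρ, hfloor | hceil⟩ := h
  exacts [⟨_, ρ, isRounding_floor, hfloor⟩, ⟨_, ρ, isRounding_ceil, hceil⟩]

theorem EqW.prepend_dbl (h : EqW s t) : EqW (Prepend a l (Dbl s)) (Prepend a l (Dbl t)) := by
  intro i hi
  simp only [Prepend, Dbl]
  split_ifs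
  · rfl
  · exact h _ (by omega)

theorem IsBinary.prepend_dbl (hs : IsBinary s) (ha : a = 0 ∨ a = 1) :
    IsBinary (Prepend a l (Dbl s)) := by
  intro i
  simp only [Prepend, Dbl]
  split_ifs
  exacts [ha, hs _]

theorem eq_one_of_prepend_dbl_ne (h : Prepend a l (Dbl s) 1 ≠ Prepend a l (Dbl s) 2) : l = 1 := by
  simp only [Prepend, Dbl] at h
  rcases (show l = 0 ∨ l = 1 ∨ 2 ≤ l by omega) with rfl | rfl | hl
  · simp at h
  · rfl
  · simp [if_pos (by omega : 1 ≤ l), if_pos hl] at h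

theorem prepend_one_dbl : Prepend a 1 (Dbl s) = Cat [a, Shf s 0, Shf s 0] (Dbl (Shf s)) := by
  funext i
  simp only [Prepend, Cat, Dbl, Shf, List.length_cons, List.length_nil]
  obtain hi | hi := Nat.lt_or_ge i 4
  · interval_cases i <;> rfl
  · rw [if_neg (by omega), if_neg (by omega)]
    congr 1
    omega

end Structure

section Bounds

variable {f : ℝ → ℤ} {θ ρ : ℝ} {a : ℤ} {l : ℕ}

theorem cat_one_zero_zero_altLe (hf : IsRounding f) (hθ : θ ∈ Set.Ioo (0 : ℝ) 1)
    (ha : a = 0 ∨ a = 1) :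
    AltLe (Cat [1, 0, 0] (Dbl (charWord θ))) (Prepend a l (Dbl (mechWord f θ ρ))) := by
  have hθ' := Set.Ioo_subset_Icc_self hθ
  have hbin := (hf.isBinary_mechWord (ρ := ρ) hθ').prepend_dbl ha (l := l)
  rcases hbin 1 with h1 | h1
  · exact Or.inl ⟨1, le_rfl, fun i hi hi' => by omega, by simp [Cat, h1]⟩
  rcases hbin 2 with h2 | h2
  · obtain rfl := eq_one_of_prepend_dbl_ne (by rw [h1, h2]; decide)
    rw [prepend_one_dbl, shf_mechWord] at h1 h2 ⊢
    obtain rfl : a = 1 := h1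
    replace h2 : mechWord f θ (ρ + θ) 0 = 0 := h2
    rw [h2]
    exact (hf.charWord_lexLe_mechWord (Set.Ioo_subset_Ico_self hθ) h2).altLe_cat_dbl (by decide)
      (isBinary_charWord hθ') (hf.isBinary_mechWord hθ')
  · exact Or.inl ⟨2, by norm_num, fun i hi hi' => by
      obtain rfl : i = 1 := by omega
      simp [Cat, h1], by simp [Cat, h2]⟩

theorem altLe_cat_zero_one_one (hf : IsRounding f) (hθ : θ ∈ Set.Ioo (0 : ℝ) 1)
    (ha : a = 0 ∨ a = 1) :
    AltLe (Prepend a l (Dbl (mechWord f θ ρ))) (Cat [0, 1, 1] (Dbl (charWord θ))) := by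
  have hθ' := Set.Ioo_subset_Icc_self hθ
  have hbin := (hf.isBinary_mechWord (ρ := ρ) hθ').prepend_dbl ha (l := l)
  rcases hbin 1 with h1 | h1
  swap
  · exact Or.inl ⟨1, le_rfl, fun i hi hi' => by omega, by simp [Cat, h1]⟩
  rcases hbin 2 with h2 | h2
  · exact Or.inl ⟨2, by norm_num, fun i hi hi' => by
      obtain rfl : i = 1 := by omega
      simp [Cat, h1], by simp [Cat, h2]⟩
  · obtain rfl := eq_one_of_prepend_dbl_ne (by rw [h1, h2]; decide)
    rw [prepend_one_dbl, shf_mechWord] at h1 h2 ⊢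
    obtain rfl : a = 0 := h1
    replace h2 : mechWord f θ (ρ + θ) 0 = 1 := h2
    rw [h2]
    exact (hf.mechWord_lexLe_charWord (Set.Ioo_subset_Ico_self hθ) h2).altLe_cat_dbl (by decide)
      (hf.isBinary_mechWord hθ') (isBinary_charWord hθ')

end Bounds

theorem stmt16 (θ : ℝ) (w : ℕ → ℤ) (hw : MemD w) (hs : HasSlope w θ) :
    AltLe (Cat [1,0,0] (Dbl (charWord θ))) w ∧
    AltLe w (Cat [0,1,1] (Dbl (charWord θ))) := by
  obtain ⟨a, l, s, θ', ha, hst, hws⟩ := hw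
  obtain ⟨f, ρ, hf, hs'⟩ := hst.exists_mechWord
  have hw : EqW (Prepend a l (Dbl (mechWord f θ' ρ))) w := (hws.trans hs'.prepend_dbl).symm
  have hslope : HasSlope w θ' :=
    (((hf.boundedDiscrepancy_mechWord θ' ρ).dbl.prepend a l).congr hw).hasSlope
  obtain rfl : θ = θ' := tendsto_nhds_unique hs hslope
  have hθ : θ ∈ Set.Ioo (0 : ℝ) 1 := hst.2.1
  exact ⟨(cat_one_zero_zero_altLe hf hθ ha).of_eqW (fun _ _ => rfl) hw,
    (altLe_cat_zero_one_one hf hθ ha).of_eqW hw fun _ _ => rfl⟩
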